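/- arXiv:2512.16038 — 3 statements merged into one kernel-verified Lean document; each statement's English description precedes it below -/
import Mathlib

section
/- If a write action is both durable and checkable, then the replay procedure (check status; if success, mark done; else re-execute) executed after any finite number of failures results in exactly one effective execution of the write action on the external system. -/
/-- External system state paired with a flag recording whether the write action has
been applied (the write action is checkable: the flag can be read). -/
def replayStep {σ : Type*} (w : σ → σ) : Bool × σ → Bool × σ :=
  fun p => if p.1 then p else (true, w p.2)

/-- If a write action is durable and checkable, then the replay procedure
(check the flag; if set, do nothing; else apply the action), retried after any
finite number of failures until it completes (i.e., executed `n + 1` times),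
results in exactly one effective execution of the write action: the final state
equals applying the action exactly once to the initial state. -/
theorem replay_exactly_once {σ : Type*} (w : σ → σ) (s0 : σ) (n : ℕ) :
    (replayStep w)^[n + 1] (false, s0) = (true, w s0) := by
  induction n with
  | zero => simp [replayStep]
  | succ k ih =>
    rw [Function.iterate_succ_apply', ih]
    simp [replayStep]
end

section
/- Consider a stateless deterministic operator modeled as a function f from input events to lists of output events. If the recovered execution processes the same sequence of input events as a failure-free execution (possibly with duplicates removed by the obsolete-event filter), then the concatenated output sequence of the recovered execution equals that of the failure-free execution. -/
/-- Deduplication keeping the first occurrence of each element. -/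
def dedupF {α : Type*} [DecidableEq α] : List α → List α
  | [] => []
  | a :: l => a :: dedupF (l.filter (· ≠ a))
termination_by l => l.length
decreasing_by
  exact Nat.lt_succ_of_le (by rw [List.length_unattach]; exact (List.length_filter_le _ _).trans_eq List.length_attach)

lemma dedupF_append {α : Type*} [DecidableEq α] :
    ∀ (I D : List α), I.Nodup → (∀ x ∈ D, x ∈ I) → dedupF (I ++ D) = I
  | [], D, _, h => by
      have : D = [] := List.eq_nil_iff_forall_not_mem.mpr (fun x hx => (List.not_mem_nil (h x hx)))
      simp [this, dedupF]
  | a :: l, D, hnd, h => by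
      rw [List.cons_append, dedupF, List.filter_append]
      have hal : a ∉ l := (List.nodup_cons.mp hnd).1
      have hfl : l.filter (· ≠ a) = l := by
        apply List.filter_eq_self.mpr
        intro x hx
        simp only [ne_eq, decide_eq_true_eq]
        exact fun hxa => hal (hxa ▸ hx)
      rw [hfl]
      congr 1
      apply dedupF_append l _ (List.nodup_cons.mp hnd).2
      intro x hx
      have hxD := List.mem_of_mem_filter hx
      have hxa : x ≠ a := by
        have := List.of_mem_filter hx
        simpa using this
      rcases List.mem_cons.mp (h x hxD) with h' | h'
      · exact absurd h' hxa
      · exact h'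

/-- For a stateless deterministic operator `f`, if the recovered execution processes
the input stream `I` followed by resent duplicates `D ⊆ I` (removed by the
obsolete-event filter, i.e., deduplication keeping first occurrences), then the
concatenated output of the recovered execution equals that of the failure-free one. -/
theorem stateless_recovered_output_eq {ε ω : Type*} [DecidableEq ε]
    (f : ε → List ω) (I D : List ε)
    (hnodup : I.Nodup) (hdup : D.Sublist I) :
    (dedupF (I ++ D)).flatMap f = I.flatMap f := by
  rw [dedupF_append I D hnodup (fun x hx => hdup.mem hx)]
end

section
/- If the dispatcher's round-robin assignment partitions a stream of events among m replicas (event i goes to replica i mod m), and a stateless operator's output for the full stream is the flat-map of f, then merging the replicas' outputs in the original event order recovers exactly the output of the unreplicated operator. -/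
/-- Round-robin data parallelization: the dispatcher sends event `i` to replica
`i % m`; replica `j` processes its sublist in order; the merger reassembles the
events by original index. Merging the replicas' streams back in original event
order recovers the original stream, hence the flat-mapped output of the stateless
operator `f` over the merged stream equals the output of the unreplicated operator. -/
theorem roundRobin_merge_correct {ε ω : Type*} (f : ε → List ω) (m : ℕ) (hm : 0 < m)
    (L : List ε) :
    ((((List.range m).flatMap
        (fun j => (L.zipIdx.map Prod.swap).filter (fun p => p.1 % m == j))).mergeSort
          (fun p q => p.1 ≤ q.1)).map Prod.snd).flatMap f
      = L.flatMap f := by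
  classical
  have hfst : (L.zipIdx.map Prod.swap).map Prod.fst = List.range L.length := by
    rw [List.map_map]; exact (List.zipIdx_map_snd 0 L).trans List.range_eq_range'.symm
  have hsnd : (L.zipIdx.map Prod.swap).map Prod.snd = L := by
    rw [List.map_map]; exact List.zipIdx_map_fst 0 L
  have hperm : ((List.range m).flatMap
      (fun j => (L.zipIdx.map Prod.swap).filter (fun p => p.1 % m == j))).Perm (L.zipIdx.map Prod.swap) := by
    rw [← Multiset.coe_eq_coe, ← Multiset.coe_bind]
    refine Multiset.ext.mpr fun a => ?_
    rw [Multiset.count_bind]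
    have key : ∀ j, Multiset.count a
          (↑((L.zipIdx.map Prod.swap).filter (fun p => p.1 % m == j)) : Multiset (ℕ × ε))
        = if a.1 % m = j then Multiset.count a (↑(L.zipIdx.map Prod.swap) : Multiset (ℕ × ε)) else 0 := by
      intro j
      rw [show (↑((L.zipIdx.map Prod.swap).filter (fun p => p.1 % m == j)) : Multiset (ℕ × ε))
          = Multiset.filter (fun p => p.1 % m = j) (↑(L.zipIdx.map Prod.swap) : Multiset (ℕ × ε)) by
        rw [Multiset.filter_coe]
        congr 1]
      exact Multiset.count_filter
    simp only [key]
    rw [show (Multiset.map (fun j => if a.1 % m = j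
          then Multiset.count a (↑(L.zipIdx.map Prod.swap) : Multiset (ℕ × ε)) else 0)
          (↑(List.range m) : Multiset ℕ)).sum
        = ∑ j ∈ Finset.range m, (if a.1 % m = j
          then Multiset.count a (↑(L.zipIdx.map Prod.swap) : Multiset (ℕ × ε)) else 0) from rfl]
    rw [Finset.sum_ite_eq]
    simp [Nat.mod_lt _ hm]
  have hperm2 : (((List.range m).flatMap
      (fun j => (L.zipIdx.map Prod.swap).filter (fun p => p.1 % m == j))).mergeSort
        (fun p q => p.1 ≤ q.1)).Perm (L.zipIdx.map Prod.swap) :=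
    (List.mergeSort_perm _ _).trans hperm
  have hnodup : ((((List.range m).flatMap
      (fun j => (L.zipIdx.map Prod.swap).filter (fun p => p.1 % m == j))).mergeSort
        (fun p q => p.1 ≤ q.1)).map Prod.fst).Nodup := by
    rw [(hperm2.map Prod.fst).nodup_iff, hfst]
    exact List.nodup_range
  have hsorted : List.Pairwise (fun p q : ℕ × ε => p.1 < q.1)
      ((((List.range m).flatMap
        (fun j => (L.zipIdx.map Prod.swap).filter (fun p => p.1 % m == j))).mergeSort
          (fun p q => p.1 ≤ q.1))) := by
    have h1 := List.pairwise_mergeSort (le := fun p q : ℕ × ε => p.1 ≤ q.1)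
      (by intros a b c; simp; omega) (by intros a b; simp; omega)
      ((List.range m).flatMap (fun j => (L.zipIdx.map Prod.swap).filter (fun p => p.1 % m == j)))
    have h2 : List.Pairwise (fun p q : ℕ × ε => p.1 ≠ q.1) _ :=
      List.pairwise_map.mp hnodup
    exact (h1.and h2).imp (by rintro a b ⟨h, h'⟩; simp at h; omega)
  have hsorted2 : List.Pairwise (fun p q : ℕ × ε => p.1 < q.1) (L.zipIdx.map Prod.swap) := by
    rw [← List.pairwise_map (f := Prod.fst), hfst]
    exact List.pairwise_lt_range
  haveI : IsAntisymm (ℕ × ε) (fun p q : ℕ × ε => p.1 < q.1) :=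
    ⟨by intro a b h h'; omega⟩
  have heq := List.Perm.eq_of_pairwise' hsorted hsorted2 hperm2
  rw [heq, hsnd]
end
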